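/- Let A(p, a, b) denote the open annulus {x : a < dist(p,x) < b} and B(p, r) the open ball. Let A(p, s/K, Ks) and A(q, t/K, Kt) be two annuli with K ≥ 100 such that dist(p,q) ≤ s/K₁ and s/4 < t < 4s, with K₁ large. If dist(A(p,s,2s), A(q,t,2t)) ≤ s/3, then the union A(p,s,2s) ∪ A(q,t,2t) can be included in a chain of annuli A(p_i, t_i, 2t_i) satisfying the nesting condition B(p_i, t_i) ⊂ B(p_{i+1}, t_{i+1}) ⊂ B(p_i, 2t_i) ⊂ B(p_{i+1}, 2t_{i+1}) for consecutive i. -/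
import Mathlib


open Metric

/-- Telescope-merging step of Lemma 2.2: two annuli `A(p,s,2s)` and `A(q,t,2t)`
of comparable scales (`s/4 < t < 4s`), with very close centers
(`dist p q ≤ s/K₁`, `K₁ ≥ 100`), whose distance is at most `s/3`, can be
included in a chain of annuli `A(p_i, t_i, 2t_i)` satisfying the nesting
condition `B(p_i,t_i) ⊆ B(p_{i+1},t_{i+1}) ⊆ B(p_i,2t_i) ⊆ B(p_{i+1},2t_{i+1})`. -/
theorem stmt_15 {X : Type*} [MetricSpace X] (K K₁ : ℝ) (hK : 100 ≤ K) (hK₁ : 100 ≤ K₁)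
    (p q : X) (s t : ℝ) (hs : 0 < s) (ht : 0 < t)
    (hpq : dist p q ≤ s / K₁)
    (hcomp : s / 4 < t ∧ t < 4 * s)
    (hclose : ∃ a ∈ ball p (2 * s) \ closure (ball p s),
              ∃ b ∈ ball q (2 * t) \ closure (ball q t), dist a b ≤ s / 3) :
    ∃ (m : ℕ) (c : Fin (m + 1) → X) (ρ : Fin (m + 1) → ℝ),
      (∀ i, 0 < ρ i) ∧
      (∀ i : Fin m,
        ball (c i.castSucc) (ρ i.castSucc) ⊆ ball (c i.succ) (ρ i.succ) ∧
        ball (c i.succ) (ρ i.succ) ⊆ ball (c i.castSucc) (2 * ρ i.castSucc) ∧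
        ball (c i.castSucc) (2 * ρ i.castSucc) ⊆ ball (c i.succ) (2 * ρ i.succ)) ∧
      ((ball p (2 * s) \ closure (ball p s)) ∪ (ball q (2 * t) \ closure (ball q t))
        ⊆ ⋃ i, ball (c i) (2 * ρ i) \ closure (ball (c i) (ρ i))) := by
  obtain ⟨hts, hst⟩ := hcomp
  refine ⟨5, fun _ => p, fun i => 23/100 * s * (19/10) ^ (i : ℕ), ?_, ?_, ?_⟩
  · intro i; positivity
  · intro i
    have hpos : (0:ℝ) < 23/100 * s * (19/10) ^ (i : ℕ) := by positivity
    have h1 : ((i.castSucc : Fin 6) : ℕ) = (i : ℕ) := rfl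
    have h2 : ((i.succ : Fin 6) : ℕ) = (i : ℕ) + 1 := rfl
    refine ⟨ball_subset_ball ?_, ball_subset_ball ?_, ball_subset_ball ?_⟩ <;>
      · simp only [h1, h2, pow_succ]; nlinarith [hpos]
  · intro x hx
    have hK100 : s / K₁ ≤ s / 100 := by
      apply div_le_div_of_nonneg_left hs.le (by norm_num) hK₁
    have hb : 23/100 * s < dist x p ∧ dist x p < 801/100 * s := by
      rcases hx with ⟨h1, h2⟩ | ⟨h1, h2⟩
      · have hxl : s ≤ dist x p := by
          by_contra hc; push_neg at hc
          exact h2 (subset_closure (mem_ball.mpr hc))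
        have hxu : dist x p < 2 * s := mem_ball.mp h1
        constructor <;> linarith
      · have hxl : t ≤ dist x q := by
          by_contra hc; push_neg at hc
          exact h2 (subset_closure (mem_ball.mpr hc))
        have hxu : dist x q < 2 * t := mem_ball.mp h1
        have t1 : dist x q ≤ dist x p + dist p q := dist_triangle x p q
        have t2 : dist x p ≤ dist x q + dist q p := dist_triangle x q p
        rw [dist_comm q p] at t2
        constructor <;> linarith
    obtain ⟨hbl, hbu⟩ := hb
    set d := dist x p with hd
    obtain ⟨i, hi1, hi2⟩ : ∃ i : Fin 6,
        23/100 * s * (19/10) ^ (i : ℕ) < d ∧ d < 2 * (23/100 * s * (19/10) ^ (i : ℕ)) := by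
      by_cases c0 : d < 46/100 * s
      · exact ⟨⟨0, by norm_num⟩, by norm_num; linarith, by norm_num; linarith⟩
      push_neg at c0
      by_cases c1 : d < 874/1000 * s
      · exact ⟨⟨1, by norm_num⟩, by norm_num; linarith, by norm_num; linarith⟩
      push_neg at c1
      by_cases c2 : d < 16606/10000 * s
      · exact ⟨⟨2, by norm_num⟩, by norm_num; linarith, by norm_num; linarith⟩
      push_neg at c2
      by_cases c3 : d < 315514/100000 * s
      · exact ⟨⟨3, by norm_num⟩, by norm_num; linarith, by norm_num; linarith⟩
      push_neg at c3
      by_cases c4 : d < 5994766/1000000 * s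
      · exact ⟨⟨4, by norm_num⟩, by norm_num; linarith, by norm_num; linarith⟩
      push_neg at c4
      exact ⟨⟨5, by norm_num⟩, by norm_num; linarith, by norm_num; linarith⟩
    refine Set.mem_iUnion.mpr ⟨i, mem_ball.mpr hi2, fun hc => ?_⟩
    have := closure_ball_subset_closedBall hc
    rw [mem_closedBall] at this
    linarith
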